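/- Let c = [a,b]. The commutator subgroup G' = [G,G] of G equals the subgroup of G generated by the three elements c, c^a = a⁻¹ca and c^{a²} = a⁻²ca². -/

import Mathlib

-- The generators `a` and `b` of the iterated monodromy group of `z^2-1`,
-- as functions on binary words (`false` = x = left, `true` = y = right),
-- defined by mutual recursion.
mutual
def aFun : List Bool → List Bool
  | [] => []
  | false :: w => true :: bFun w
  | true :: w => false :: w

def bFun : List Bool → List Bool
  | [] => []
  | false :: w => false :: aFun w
  | true :: w => true :: w
end

-- The inverses of `aFun`/`bFun`.
mutual
def aInv : List Bool → List Bool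
  | [] => []
  | true :: w => false :: bInv w
  | false :: w => true :: w

def bInv : List Bool → List Bool
  | [] => []
  | false :: w => false :: aInv w
  | true :: w => true :: w
end

mutual
theorem aFun_aInv : ∀ w, aFun (aInv w) = w
  | [] => rfl
  | true :: w => by simp [aInv, aFun, bFun_bInv w]
  | false :: w => by simp [aInv, aFun]

theorem bFun_bInv : ∀ w, bFun (bInv w) = w
  | [] => rfl
  | false :: w => by simp [bInv, bFun, aFun_aInv w]
  | true :: w => by simp [bInv, bFun]
end

mutual
theorem aInv_aFun : ∀ w, aInv (aFun w) = w
  | [] => rfl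
  | false :: w => by simp [aFun, aInv, bInv_bFun w]
  | true :: w => by simp [aFun, aInv]

theorem bInv_bFun : ∀ w, bInv (bFun w) = w
  | [] => rfl
  | false :: w => by simp [bFun, bInv, aInv_aFun w]
  | true :: w => by simp [bFun, bInv]
end

/-- `a` as a permutation of the set of binary words. -/
def aPerm : Equiv.Perm (List Bool) := ⟨aFun, aInv, aInv_aFun, aFun_aInv⟩
/-- `b` as a permutation of the set of binary words. -/
def bPerm : Equiv.Perm (List Bool) := ⟨bFun, bInv, bInv_bFun, bFun_bInv⟩

mutual
theorem aFun_length : ∀ w, (aFun w).length = w.length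
  | [] => rfl
  | false :: w => by simp [aFun, bFun_length w]
  | true :: w => by simp [aFun]

theorem bFun_length : ∀ w, (bFun w).length = w.length
  | [] => rfl
  | false :: w => by simp [bFun, aFun_length w]
  | true :: w => by simp [bFun]
end

mutual
theorem aFun_prefix : ∀ u v, u <+: v → aFun u <+: aFun v
  | [], v, _ => by simp [aFun]
  | false :: u, false :: v, h => by
      simp only [List.cons_prefix_cons] at h
      simpa [aFun, List.cons_prefix_cons] using bFun_prefix u v h.2
  | true :: u, true :: v, h => by
      simp only [List.cons_prefix_cons] at h
      simpa [aFun, List.cons_prefix_cons] using h.2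
  | false :: u, true :: v, h => by simp [List.cons_prefix_cons] at h
  | true :: u, false :: v, h => by simp [List.cons_prefix_cons] at h
  | _ :: u, [], h => by simp at h

theorem bFun_prefix : ∀ u v, u <+: v → bFun u <+: bFun v
  | [], v, _ => by simp [bFun]
  | false :: u, false :: v, h => by
      simp only [List.cons_prefix_cons] at h
      simpa [bFun, List.cons_prefix_cons] using aFun_prefix u v h.2
  | true :: u, true :: v, h => by
      simp only [List.cons_prefix_cons] at h
      simpa [bFun, List.cons_prefix_cons] using h.2
  | false :: u, true :: v, h => by simp [List.cons_prefix_cons] at h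
  | true :: u, false :: v, h => by simp [List.cons_prefix_cons] at h
  | _ :: u, [], h => by simp at h
end

/-- The group of automorphisms of the binary rooted tree: bijections of the set of
binary words preserving word length and the prefix relation. -/
def treeAut : Subgroup (Equiv.Perm (List Bool)) where
  carrier := {f | (∀ w, (f w).length = w.length) ∧ ∀ u v : List Bool, u <+: v → f u <+: f v}
  one_mem' := ⟨fun _ => rfl, fun _ _ h => h⟩
  mul_mem' := by
    rintro f g ⟨hf1, hf2⟩ ⟨hg1, hg2⟩
    exact ⟨fun w => (hf1 _).trans (hg1 w), fun u v h => hf2 _ _ (hg2 _ _ h)⟩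
  inv_mem' := by
    rintro f ⟨hf1, hf2⟩
    constructor
    · intro w
      have := hf1 (f⁻¹ w)
      simpa using this.symm
    · intro u v h
      have hlen : (f⁻¹ u).length ≤ (f⁻¹ v).length := by
        have h1 : (f⁻¹ u).length = u.length := by have := hf1 (f⁻¹ u); simpa using this.symm
        have h2 : (f⁻¹ v).length = v.length := by have := hf1 (f⁻¹ v); simpa using this.symm
        rw [h1, h2]; exact h.length_le
      set p := (f⁻¹ v).take (f⁻¹ u).length with hp
      have hpv : p <+: f⁻¹ v := List.take_prefix _ _
      have hplen : p.length = (f⁻¹ u).length := by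
        simp only [hp, List.length_take]; omega
      have hfp : f p <+: v := by
        have := hf2 _ _ hpv
        simpa using this
      have hfplen : (f p).length = u.length := by
        rw [hf1 p, hplen]
        have := hf1 (f⁻¹ u); simpa using this.symm
      have : f p = u := by
        rcases List.prefix_or_prefix_of_prefix hfp h with h' | h'
        · exact h'.eq_of_length hfplen
        · exact (h'.eq_of_length hfplen.symm).symm
      have : p = f⁻¹ u := by
        have := congrArg (f⁻¹ : Equiv.Perm (List Bool)) this
        simpa using this
      rw [← this]; exact hpv

/-- The generator `a` as a tree automorphism. -/
def A : treeAut := ⟨aPerm, aFun_length, aFun_prefix⟩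
/-- The generator `b` as a tree automorphism. -/
def B : treeAut := ⟨bPerm, bFun_length, bFun_prefix⟩

/-- The iterated monodromy group of `z ↦ z² - 1`: the subgroup of the automorphism
group of the binary rooted tree generated by `a` and `b`. -/
def G : Subgroup treeAut := Subgroup.closure {A, B}

/-- Apply a tree automorphism to a binary word. -/
def app (g : treeAut) (w : List Bool) : List Bool := g.val w

/-- `c = [a,b] = a⁻¹b⁻¹ab`. -/
def cElt : treeAut := A⁻¹ * B⁻¹ * A * B

-- ===== auxiliary lemmas for the proof =====

theorem aInv_apply : ∀ w, aPerm⁻¹ w = aInv w := fun _ => rfl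
theorem bInv_apply : ∀ w, bPerm⁻¹ w = bInv w := fun _ => rfl
theorem aPerm_apply : ∀ w, aPerm w = aFun w := fun _ => rfl
theorem bPerm_apply : ∀ w, bPerm w = bFun w := fun _ => rfl

theorem k2 : ∀ w : List Bool, bInv (bInv (aInv (bFun (aFun (bFun (w)))))) = bInv (aInv (bFun (aFun (w)))) := by
  intro w
  rcases w with _ | ⟨_ | _, w⟩ <;>
    simp [aFun, bFun, aInv, bInv, aFun_aInv, bFun_bInv, aInv_aFun, bInv_bFun]

theorem k3 : ∀ w : List Bool, aInv (bFun (aFun (bInv (w)))) = bInv (aInv (bFun (aFun (w)))) := by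
  intro w
  rcases w with _ | ⟨_ | _, w⟩ <;>
    simp [aFun, bFun, aInv, bInv, aFun_aInv, bFun_bInv, aInv_aFun, bInv_bFun]

theorem r1perm : bPerm⁻¹ * aPerm⁻¹ * bPerm⁻¹ * aPerm * bPerm * bPerm = aPerm⁻¹ * bPerm⁻¹ * aPerm * bPerm := by
  apply Equiv.ext; intro w
  rcases w with _ | ⟨_ | _, w⟩ <;>
    simp [Equiv.Perm.mul_apply, aInv_apply, bInv_apply, aPerm_apply, bPerm_apply,
      aFun, bFun, aInv, bInv, aFun_aInv, bFun_bInv, aInv_aFun, bInv_bFun]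

theorem r2perm : aPerm⁻¹ * aPerm⁻¹ * aPerm⁻¹ * aPerm⁻¹ * bPerm⁻¹ * aPerm * bPerm * aPerm * aPerm * aPerm * aPerm⁻¹ * aPerm⁻¹ * aPerm⁻¹ * bPerm⁻¹ * aPerm * bPerm * aPerm * aPerm = aPerm⁻¹ * aPerm⁻¹ * bPerm⁻¹ * aPerm * bPerm * aPerm * aPerm⁻¹ * bPerm⁻¹ * aPerm * bPerm := by
  apply Equiv.ext; intro w
  rcases w with _ | ⟨_ | _, w⟩ <;>
    simp [Equiv.Perm.mul_apply, aInv_apply, bInv_apply, aPerm_apply, bPerm_apply,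
      aFun, bFun, aInv, bInv, aFun_aInv, bFun_bInv, aInv_aFun, bInv_bFun, k2]

theorem r3perm : aPerm⁻¹ * bPerm⁻¹ * aPerm * bPerm * aPerm * aPerm⁻¹ * bPerm⁻¹ * aPerm * bPerm * aPerm⁻¹ = aPerm⁻¹ * aPerm⁻¹ * aPerm⁻¹ * bPerm⁻¹ * aPerm * bPerm * aPerm * aPerm * aPerm⁻¹ * aPerm⁻¹ * bPerm⁻¹ * aPerm * bPerm * aPerm := by
  apply Equiv.ext; intro w
  rcases w with _ | ⟨_ | _, w⟩ <;>
    simp [Equiv.Perm.mul_apply, aInv_apply, bInv_apply, aPerm_apply, bPerm_apply,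
      aFun, bFun, aInv, bInv, aFun_aInv, bFun_bInv, aInv_aFun, bInv_bFun, k3]

theorem r4perm : aPerm⁻¹ * bPerm⁻¹ * aPerm * bPerm * bPerm⁻¹ * aPerm⁻¹ * aPerm⁻¹ * bPerm⁻¹ * aPerm * bPerm * aPerm * bPerm = aPerm⁻¹ * aPerm⁻¹ * bPerm⁻¹ * aPerm * bPerm * aPerm * aPerm⁻¹ * bPerm⁻¹ * aPerm * bPerm := by
  apply Equiv.ext; intro w
  rcases w with _ | ⟨_ | _, w⟩ <;>
    simp [Equiv.Perm.mul_apply, aInv_apply, bInv_apply, aPerm_apply, bPerm_apply,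
      aFun, bFun, aInv, bInv, aFun_aInv, bFun_bInv, aInv_aFun, bInv_bFun]

theorem r5perm : bPerm * aPerm⁻¹ * aPerm⁻¹ * bPerm⁻¹ * aPerm * bPerm * aPerm * bPerm⁻¹ * aPerm⁻¹ * bPerm⁻¹ * aPerm * bPerm = aPerm⁻¹ * bPerm⁻¹ * aPerm * bPerm * aPerm⁻¹ * aPerm⁻¹ * bPerm⁻¹ * aPerm * bPerm * aPerm := by
  apply Equiv.ext; intro w
  rcases w with _ | ⟨_ | _, w⟩ <;>
    simp [Equiv.Perm.mul_apply, aInv_apply, bInv_apply, aPerm_apply, bPerm_apply,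
      aFun, bFun, aInv, bInv, aFun_aInv, bFun_bInv, aInv_aFun, bInv_bFun]

theorem r6perm : aPerm⁻¹ * aPerm⁻¹ * bPerm⁻¹ * aPerm * bPerm * aPerm * aPerm⁻¹ * bPerm⁻¹ * aPerm * bPerm * bPerm⁻¹ * aPerm⁻¹ * aPerm⁻¹ * aPerm⁻¹ * bPerm⁻¹ * aPerm * bPerm * aPerm * aPerm * bPerm = aPerm⁻¹ * bPerm⁻¹ * aPerm * bPerm * aPerm⁻¹ * aPerm⁻¹ * bPerm⁻¹ * aPerm * bPerm * aPerm * aPerm⁻¹ * aPerm⁻¹ * aPerm⁻¹ * bPerm⁻¹ * aPerm * bPerm * aPerm * aPerm := by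
  apply Equiv.ext; intro w
  rcases w with _ | ⟨_ | _, w⟩ <;>
    simp [Equiv.Perm.mul_apply, aInv_apply, bInv_apply, aPerm_apply, bPerm_apply,
      aFun, bFun, aInv, bInv, aFun_aInv, bFun_bInv, aInv_aFun, bInv_bFun]

theorem r7perm : bPerm * aPerm⁻¹ * aPerm⁻¹ * aPerm⁻¹ * bPerm⁻¹ * aPerm * bPerm * aPerm * aPerm * bPerm⁻¹ * aPerm⁻¹ * bPerm⁻¹ * aPerm * bPerm * aPerm⁻¹ * aPerm⁻¹ * bPerm⁻¹ * aPerm * bPerm * aPerm = aPerm⁻¹ * bPerm⁻¹ * aPerm * bPerm * aPerm⁻¹ * aPerm⁻¹ * bPerm⁻¹ * aPerm * bPerm * aPerm * aPerm⁻¹ * aPerm⁻¹ * aPerm⁻¹ * bPerm⁻¹ * aPerm * bPerm * aPerm * aPerm := by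
  apply Equiv.ext; intro w
  rcases w with _ | ⟨_ | _, w⟩ <;>
    simp [Equiv.Perm.mul_apply, aInv_apply, bInv_apply, aPerm_apply, bPerm_apply,
      aFun, bFun, aInv, bInv, aFun_aInv, bFun_bInv, aInv_aFun, bInv_bFun]


/-- `c^a` -/
def cA : treeAut := A⁻¹ * cElt * A
/-- `c^{a²}` -/
def cAA : treeAut := (A ^ 2)⁻¹ * cElt * A ^ 2
/-- the candidate commutator subgroup -/
def NN : Subgroup treeAut := Subgroup.closure {cElt, cA, cAA}

theorem tR1 : B⁻¹ * cElt * B = cElt := by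
  apply Subtype.ext
  simpa only [cElt, A, B, Subgroup.coe_mul, InvMemClass.coe_inv, mul_assoc] using r1perm

theorem tR2 : A⁻¹ * cAA * A * cAA = cA * cElt := by
  apply Subtype.ext
  simpa only [cA, cAA, cElt, A, B, pow_two, mul_inv_rev, Subgroup.coe_mul,
    InvMemClass.coe_inv, mul_assoc] using (by simpa only [mul_assoc] using r2perm :
      _ = aPerm⁻¹ * (aPerm⁻¹ * (bPerm⁻¹ * (aPerm * (bPerm * (aPerm * (aPerm⁻¹ * (bPerm⁻¹ * (aPerm * bPerm)))))))))

theorem tR3 : cElt * A * cElt * A⁻¹ = cAA * cA := by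
  apply Subtype.ext
  simpa only [cA, cAA, cElt, A, B, pow_two, mul_inv_rev, Subgroup.coe_mul,
    InvMemClass.coe_inv, mul_assoc] using (by simpa only [mul_assoc] using r3perm : _)

theorem tR4 : cElt * B⁻¹ * cA * B = cA * cElt := by
  apply Subtype.ext
  simpa only [cA, cAA, cElt, A, B, pow_two, mul_inv_rev, Subgroup.coe_mul,
    InvMemClass.coe_inv, mul_assoc] using (by simpa only [mul_assoc] using r4perm : _)

theorem tR5 : B * cA * B⁻¹ * cElt = cElt * cA := by
  apply Subtype.ext
  simpa only [cA, cAA, cElt, A, B, pow_two, mul_inv_rev, Subgroup.coe_mul,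
    InvMemClass.coe_inv, mul_assoc] using (by simpa only [mul_assoc] using r5perm : _)

theorem tR6 : cA * cElt * B⁻¹ * cAA * B = cElt * cA * cAA := by
  apply Subtype.ext
  simpa only [cA, cAA, cElt, A, B, pow_two, mul_inv_rev, Subgroup.coe_mul,
    InvMemClass.coe_inv, mul_assoc] using (by simpa only [mul_assoc] using r6perm : _)

theorem tR7 : B * cAA * B⁻¹ * cElt * cA = cElt * cA * cAA := by
  apply Subtype.ext
  simpa only [cA, cAA, cElt, A, B, pow_two, mul_inv_rev, Subgroup.coe_mul,
    InvMemClass.coe_inv, mul_assoc] using (by simpa only [mul_assoc] using r7perm : _)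

theorem hc_mem : cElt ∈ NN := Subgroup.subset_closure (by simp)
theorem hcA_mem : cA ∈ NN := Subgroup.subset_closure (by simp)
theorem hcAA_mem : cAA ∈ NN := Subgroup.subset_closure (by simp)

theorem conjA_mem : ∀ n ∈ NN, A⁻¹ * n * A ∈ NN ∧ A * n * A⁻¹ ∈ NN := by
  intro n hn
  induction hn using Subgroup.closure_induction with
  | mem x hx =>
    rcases hx with rfl | rfl | rfl
    · constructor
      · have h : A⁻¹ * cElt * A = cA := rfl
        rw [h]; exact hcA_mem
      · have h : A * cElt * A⁻¹ = cElt⁻¹ * (cElt * A * cElt * A⁻¹) := by group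
        rw [h, tR3]
        exact mul_mem (inv_mem hc_mem) (mul_mem hcAA_mem hcA_mem)
    · constructor
      · have h : A⁻¹ * cA * A = cAA := by simp only [cA, cAA, pow_two, mul_inv_rev]; group
        rw [h]; exact hcAA_mem
      · have h : A * cA * A⁻¹ = cElt := by rw [cA]; group
        rw [h]; exact hc_mem
    · constructor
      · have h : A⁻¹ * cAA * A = (A⁻¹ * cAA * A * cAA) * cAA⁻¹ := by group
        rw [h, tR2]
        exact mul_mem (mul_mem hcA_mem hc_mem) (inv_mem hcAA_mem)
      · have h : A * cAA * A⁻¹ = cA := by simp only [cA, cAA, pow_two, mul_inv_rev]; group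
        rw [h]; exact hcA_mem
  | one => constructor <;> · simpa using one_mem NN
  | mul x y hx hy ihx ihy =>
    constructor
    · have h : A⁻¹ * (x * y) * A = (A⁻¹ * x * A) * (A⁻¹ * y * A) := by group
      rw [h]; exact mul_mem ihx.1 ihy.1
    · have h : A * (x * y) * A⁻¹ = (A * x * A⁻¹) * (A * y * A⁻¹) := by group
      rw [h]; exact mul_mem ihx.2 ihy.2
  | inv x hx ihx =>
    constructor
    · have h : A⁻¹ * x⁻¹ * A = (A⁻¹ * x * A)⁻¹ := by group
      rw [h]; exact inv_mem ihx.1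
    · have h : A * x⁻¹ * A⁻¹ = (A * x * A⁻¹)⁻¹ := by group
      rw [h]; exact inv_mem ihx.2

theorem conjB_mem : ∀ n ∈ NN, B⁻¹ * n * B ∈ NN ∧ B * n * B⁻¹ ∈ NN := by
  intro n hn
  induction hn using Subgroup.closure_induction with
  | mem x hx =>
    rcases hx with rfl | rfl | rfl
    · constructor
      · rw [tR1]; exact hc_mem
      · have h : B * cElt * B⁻¹ = cElt := by
          conv_lhs => rw [← tR1]
          group
        rw [h]; exact hc_mem
    · constructor
      · have h : B⁻¹ * cA * B = cElt⁻¹ * (cElt * B⁻¹ * cA * B) := by group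
        rw [h, tR4]
        exact mul_mem (inv_mem hc_mem) (mul_mem hcA_mem hc_mem)
      · have h : B * cA * B⁻¹ = (B * cA * B⁻¹ * cElt) * cElt⁻¹ := by group
        rw [h, tR5]
        exact mul_mem (mul_mem hc_mem hcA_mem) (inv_mem hc_mem)
    · constructor
      · have h : B⁻¹ * cAA * B = cElt⁻¹ * (cA⁻¹ * (cA * cElt * B⁻¹ * cAA * B)) := by group
        rw [h, tR6]
        exact mul_mem (inv_mem hc_mem) (mul_mem (inv_mem hcA_mem)
          (mul_mem (mul_mem hc_mem hcA_mem) hcAA_mem))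
      · have h : B * cAA * B⁻¹ = (B * cAA * B⁻¹ * cElt * cA) * cA⁻¹ * cElt⁻¹ := by group
        rw [h, tR7]
        exact mul_mem (mul_mem (mul_mem (mul_mem hc_mem hcA_mem) hcAA_mem)
          (inv_mem hcA_mem)) (inv_mem hc_mem)
  | one => constructor <;> · simpa using one_mem NN
  | mul x y hx hy ihx ihy =>
    constructor
    · have h : B⁻¹ * (x * y) * B = (B⁻¹ * x * B) * (B⁻¹ * y * B) := by group
      rw [h]; exact mul_mem ihx.1 ihy.1
    · have h : B * (x * y) * B⁻¹ = (B * x * B⁻¹) * (B * y * B⁻¹) := by group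
      rw [h]; exact mul_mem ihx.2 ihy.2
  | inv x hx ihx =>
    constructor
    · have h : B⁻¹ * x⁻¹ * B = (B⁻¹ * x * B)⁻¹ := by group
      rw [h]; exact inv_mem ihx.1
    · have h : B * x⁻¹ * B⁻¹ = (B * x * B⁻¹)⁻¹ := by group
      rw [h]; exact inv_mem ihx.2

theorem conj_mem : ∀ g ∈ G, ∀ n ∈ NN, g⁻¹ * n * g ∈ NN ∧ g * n * g⁻¹ ∈ NN := by
  intro g hg
  induction hg using Subgroup.closure_induction with
  | mem x hx =>
    rcases hx with rfl | rfl
    · exact conjA_mem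
    · exact conjB_mem
  | one => intro n hn; constructor <;> · simpa using hn
  | mul x y hx hy ihx ihy =>
    intro n hn
    constructor
    · have h : (x * y)⁻¹ * n * (x * y) = y⁻¹ * (x⁻¹ * n * x) * y := by group
      rw [h]; exact (ihy _ ((ihx n hn).1)).1
    · have h : (x * y) * n * (x * y)⁻¹ = x * (y * n * y⁻¹) * x⁻¹ := by group
      rw [h]; exact (ihx _ ((ihy n hn).2)).2
  | inv x hx ihx =>
    intro n hn
    constructor
    · have h : x⁻¹⁻¹ * n * x⁻¹ = x * n * x⁻¹ := by group
      rw [h]; exact (ihx n hn).2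
    · have h : x⁻¹ * n * x⁻¹⁻¹ = x⁻¹ * n * x := by group
      rw [h]; exact (ihx n hn).1

theorem hA_mem : A ∈ G := Subgroup.subset_closure (by simp)
theorem hB_mem : B ∈ G := Subgroup.subset_closure (by simp)

open scoped commutatorElement

theorem comm_base_A : ∀ h ∈ G, ⁅A, h⁆ ∈ NN ∧ ⁅B, h⁆ ∈ NN := by
  intro h hh
  induction hh using Subgroup.closure_induction with
  | mem x hx =>
    have hBA : ⁅B, A⁆ ∈ NN := by
      have h1 : ⁅B, A⁆ = A * (B * cElt⁻¹ * B⁻¹) * A⁻¹ := by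
        simp only [commutatorElement_def, cElt]; group
      rw [h1]
      exact (conj_mem A hA_mem _ ((conj_mem B hB_mem _ (inv_mem hc_mem)).2)).2
    have hAB : ⁅A, B⁆ ∈ NN := by
      rw [← commutatorElement_inv]
      exact inv_mem hBA
    rcases hx with rfl | rfl
    · exact ⟨by simpa using one_mem NN, hBA⟩
    · exact ⟨hAB, by simpa using one_mem NN⟩
  | one => constructor <;> · simpa using one_mem NN
  | mul x y hx hy ihx ihy =>
    constructor
    · have h1 : ⁅A, x * y⁆ = ⁅A, x⁆ * (x * ⁅A, y⁆ * x⁻¹) := by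
        simp only [commutatorElement_def]; group
      rw [h1]
      exact mul_mem ihx.1 ((conj_mem x hx _ ihy.1).2)
    · have h1 : ⁅B, x * y⁆ = ⁅B, x⁆ * (x * ⁅B, y⁆ * x⁻¹) := by
        simp only [commutatorElement_def]; group
      rw [h1]
      exact mul_mem ihx.2 ((conj_mem x hx _ ihy.2).2)
  | inv x hx ihx =>
    constructor
    · have h1 : ⁅A, x⁻¹⁆ = x⁻¹ * ⁅A, x⁆⁻¹ * x := by
        simp only [commutatorElement_def]; group
      rw [h1]
      exact (conj_mem x hx _ (inv_mem ihx.1)).1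
    · have h1 : ⁅B, x⁻¹⁆ = x⁻¹ * ⁅B, x⁆⁻¹ * x := by
        simp only [commutatorElement_def]; group
      rw [h1]
      exact (conj_mem x hx _ (inv_mem ihx.2)).1

theorem comm_mem : ∀ g ∈ G, ∀ h ∈ G, ⁅g, h⁆ ∈ NN := by
  intro g hg
  induction hg using Subgroup.closure_induction with
  | mem x hx =>
    rcases hx with rfl | rfl
    · exact fun h hh => (comm_base_A h hh).1
    · exact fun h hh => (comm_base_A h hh).2
  | one => intro h hh; simpa using one_mem NN
  | mul x y hx hy ihx ihy =>
    intro h hh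
    have h1 : ⁅x * y, h⁆ = (x * ⁅y, h⁆ * x⁻¹) * ⁅x, h⁆ := by
      simp only [commutatorElement_def]; group
    rw [h1]
    exact mul_mem ((conj_mem x hx _ (ihy h hh)).2) (ihx h hh)
  | inv x hx ihx =>
    intro h hh
    have h1 : ⁅x⁻¹, h⁆ = x⁻¹ * ⁅x, h⁆⁻¹ * x := by
      simp only [commutatorElement_def]; group
    rw [h1]
    exact (conj_mem x hx _ (inv_mem (ihx h hh))).1

/-- the commutator subgroup `G' = [G,G]` equals the subgroup generated
by `c`, `c^a = a⁻¹ca` and `c^{a²} = a⁻²ca²`. -/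
theorem commutator_subgroup_generators :
    ⁅G, G⁆ = Subgroup.closure {cElt, A⁻¹ * cElt * A, (A ^ 2)⁻¹ * cElt * A ^ 2} := by
  show ⁅G, G⁆ = NN
  apply le_antisymm
  · exact Subgroup.commutator_le.mpr comm_mem
  · rw [NN, Subgroup.closure_le]
    rintro x (rfl | rfl | rfl)
    · have h1 : cElt = ⁅A⁻¹, B⁻¹⁆ := by
        simp only [commutatorElement_def, cElt]; group
      rw [h1]
      exact Subgroup.commutator_mem_commutator (inv_mem hA_mem) (inv_mem hB_mem)
    · have h1 : cA = ⁅A⁻¹, A⁻¹ * B⁻¹ * A⁆ := by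
        simp only [commutatorElement_def, cA, cElt]; group
      rw [h1]
      exact Subgroup.commutator_mem_commutator (inv_mem hA_mem)
        (mul_mem (mul_mem (inv_mem hA_mem) (inv_mem hB_mem)) hA_mem)
    · have h1 : cAA = ⁅A⁻¹, A⁻¹ * A⁻¹ * B⁻¹ * A⁆ := by
        simp only [commutatorElement_def, cAA, cElt, pow_two, mul_inv_rev]; group
      rw [h1]
      exact Subgroup.commutator_mem_commutator (inv_mem hA_mem)
        (mul_mem (mul_mem (mul_mem (inv_mem hA_mem) (inv_mem hA_mem)) (inv_mem hB_mem)) hA_mem)
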